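/- For h(x) = (x+1)(1+1/x)^x, the inequality h(x) - h(x-1) ≥ e holds for all real x ≥ 3. -/

import Mathlib

/-!
By the mean value theorem `h x - h (x - 1) = h' c` for some `c ≥ 2`, and `h' c = h c * L` with
`L = log (1 + 1 / c)`. Writing `y = (c + 1) L` and `u = c L`, we have `h' c = y * exp u`, so it
suffices that `log y ≥ 1 - u`. The bound `log y ≥ 2 (y - 1) / (y + 1)` reduces this to
`(y + 1) (u + 1) ≥ 4`. With `s = 1 / (2c + 1)` and `A = (c + 1/2) L` one has `y = (1 + s) A` and
`u = (1 - s) A`, and the first two terms of the series `L = 2 ∑ s ^ (2k+1) / (2k+1)` give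
`A ≥ 1 + s ^ 2 / 3`, which is enough.
-/

open Real

noncomputable def h (x : ℝ) : ℝ := (x + 1) * (1 + 1 / x) ^ x

lemma one_sub_le_log_of_four_le_mul {y u : ℝ} (hy : 1 ≤ y) (hyu : 4 ≤ (y + 1) * (u + 1)) :
    1 - u ≤ log y :=
  calc
    1 - u ≤ 2 * (y - 1) / (y - 1 + 2) := by rw [le_div_iff₀ (by linarith)]; nlinarith
    _ ≤ log y := by simpa using le_log_one_add_of_nonneg (sub_nonneg.2 hy)

lemma four_le_mul_of_one_add_sq_div_three_le {s A : ℝ} (hs₀ : 0 ≤ s) (hs : s ≤ 1 / 2)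
    (hA : 1 + s ^ 2 / 3 ≤ A) :
    4 ≤ ((1 + s) * A + 1) * ((1 - s) * A + 1) := by
  have hs2 : s ^ 2 ≤ 1 / 4 := by nlinarith
  have hsq : (1 - s ^ 2) * (1 + s ^ 2 / 3) ^ 2 ≤ (1 - s ^ 2) * A ^ 2 :=
    mul_le_mul_of_nonneg_left (pow_le_pow_left₀ (by positivity) hA 2) (by linarith)
  nlinarith [mul_nonneg (sq_nonneg s) (sq_nonneg s), mul_nonneg (sq_nonneg s) (sub_nonneg.2 hs2)]

lemma two_mul_add_le_log_one_add_inv {a : ℝ} (ha : 0 < a) :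
    2 * (2 * a + 1)⁻¹ + 2 / 3 * (2 * a + 1)⁻¹ ^ 3 ≤ log (1 + a⁻¹) := by
  have hsum := sum_le_hasSum (Finset.range 2) (fun _ _ => by positivity) (hasSum_log_one_add_inv ha)
  norm_num [Finset.sum_range_succ] at hsum
  rwa [inv_pow]

lemma hasDerivAt_h {x : ℝ} (hx : 0 < x) : HasDerivAt h (h x * log (1 + 1 / x)) x := by
  have hbase : HasDerivAt (fun y => 1 + 1 / y) (-(x ^ 2)⁻¹) x := by
    simpa [one_div] using (hasDerivAt_inv hx.ne').const_add 1
  have hpow := hbase.rpow (hasDerivAt_id' x) (by positivity)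
  refine (((hasDerivAt_id' x).add_const 1).mul hpow).congr_deriv ?_
  rw [h, rpow_sub_one (by positivity)]
  field_simp
  ring

theorem exp_one_le_h_mul_log {c : ℝ} (hc : 1 / 2 ≤ c) : exp 1 ≤ h c * log (1 + 1 / c) := by
  set L := log (1 + 1 / c)
  set s := (2 * c + 1)⁻¹
  have hc₀ : 0 < c := by linarith
  have hs₀ : 0 < s := by positivity
  have hsc : s * (2 * c + 1) = 1 := inv_mul_cancel₀ (by positivity)
  have hs : s ≤ 1 / 2 := by rw [inv_le_comm₀ (by positivity) (by norm_num)]; linarith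
  have hA : 1 + s ^ 2 / 3 ≤ (c + 1 / 2) * L := by
    have hseries := two_mul_add_le_log_one_add_inv hc₀
    rw [← one_div c] at hseries
    calc
      1 + s ^ 2 / 3 = (c + 1 / 2) * (2 * s + 2 / 3 * s ^ 3) := by
        linear_combination -(1 + s ^ 2 / 3) * hsc
      _ ≤ (c + 1 / 2) * L := by gcongr
  have hy : (c + 1) * L = (1 + s) * ((c + 1 / 2) * L) := by linear_combination (-L / 2) * hsc
  have hu : c * L = (1 - s) * ((c + 1 / 2) * L) := by linear_combination (L / 2) * hsc
  have hy₁ : 1 ≤ (c + 1) * L := by rw [hy]; nlinarith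
  have hlog : 1 - c * L ≤ log ((c + 1) * L) :=
    one_sub_le_log_of_four_le_mul hy₁ <| by
      rw [hy, hu]; exact four_le_mul_of_one_add_sq_div_three_le hs₀.le hs hA
  calc exp 1 ≤ exp (log ((c + 1) * L) + c * L) := exp_le_exp.2 (by linarith)
    _ = h c * L := by
      rw [exp_add, exp_log (by linarith), h, rpow_def_of_pos (by positivity), mul_comm (log _)]
      ring

theorem h_gap_ge_e (x : ℝ) (hx : 3 ≤ x) : h x - h (x - 1) ≥ Real.exp 1 := by
  have hderiv : ∀ y ∈ Set.Icc (x - 1) x, HasDerivAt h (h y * log (1 + 1 / y)) y :=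
    fun y hy => hasDerivAt_h (by linarith [hy.1])
  obtain ⟨c, hc, hslope⟩ := exists_hasDerivAt_eq_slope h _ (sub_one_lt x)
    (HasDerivAt.continuousOn hderiv) fun y hy => hderiv y (Set.Ioo_subset_Icc_self hy)
  rw [sub_sub_cancel, div_one] at hslope
  rw [ge_iff_le, ← hslope]
  exact exp_one_le_h_mul_log (by linarith [hc.1])
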